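/- Let Λ = Z_p[[Γ]] with Γ ≅ Z_p and let ι : Λ → Λ be the involution induced by γ ↦ γ⁻¹. Then H¹(⟨ι⟩, Λ×) has order 2, with representatives given by the classes of the constant cocycles 1 and -1. -/

import Mathlib

open PowerSeries

/-- Any ring hom `ℤ_[p] → ZMod p` equals the canonical one. -/
lemma aux_ringHom_eq_toZMod (p : ℕ) [Fact p.Prime] (χ : ℤ_[p] →+* ZMod p) :
    χ = PadicInt.toZMod := by
  ext x
  have hm : x - (((PadicInt.toZMod x).val : ℕ) : ℤ_[p]) ∈ IsLocalRing.maximalIdeal ℤ_[p] := by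
    rw [← PadicInt.ker_toZMod, RingHom.mem_ker, map_sub, map_natCast, ZMod.natCast_val,
      ZMod.cast_id, sub_self]
  rw [PadicInt.maximalIdeal_eq_span_p, Ideal.mem_span_singleton] at hm
  obtain ⟨y, hy⟩ := hm
  have hx : x = (((PadicInt.toZMod x).val : ℕ) : ℤ_[p]) + (p : ℤ_[p]) * y := by
    rw [← hy]; ring
  rw [hx]
  simp [ZMod.natCast_val, ZMod.natCast_self]

lemma aux_isUnit_of_toZMod_ne_zero {p : ℕ} [Fact p.Prime] {x : ℤ_[p]}
    (h : PadicInt.toZMod x ≠ 0) : IsUnit x := by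
  by_contra hx
  apply h
  rw [← RingHom.mem_ker, PadicInt.ker_toZMod]
  exact (IsLocalRing.mem_maximalIdeal x).mpr hx

/-- Let `Λ = ℤ_p⟦T⟧ ≅ ℤ_p[[Γ]]` (`Γ ≅ ℤ_p`, with topological generator
`γ = 1 + T`) and `ι : Λ → Λ` the involution induced by `γ ↦ γ⁻¹` (so `ι(1+T)·(1+T) = 1`
and `ι ∘ ι = id`). Then the Tate cohomology group
`H¹(⟨ι⟩, Λˣ) = {u ∈ Λˣ : u·ι(u) = 1}/{v·ι(v)⁻¹}` has order 2, represented by the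
classes of `1` and `-1`: every `u` with `u·ι(u) = 1` is of the form `v·ι(v)⁻¹` or
`-v·ι(v)⁻¹`, and `-1` is not of the form `v·ι(v)⁻¹`. -/
theorem H1_iota_units_order_two
    (p : ℕ) [Fact p.Prime] (hp : Odd p)
    (ι : PowerSeries ℤ_[p] ≃+* PowerSeries ℤ_[p])
    (hinvol : ∀ f, ι (ι f) = f)
    (hγ : ι (1 + PowerSeries.X) * (1 + PowerSeries.X) = 1) :
    (∀ u : (PowerSeries ℤ_[p])ˣ,
        u * Units.map ι.toRingHom.toMonoidHom u = 1 →
        (∃ v : (PowerSeries ℤ_[p])ˣ,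
            u = v * (Units.map ι.toRingHom.toMonoidHom v)⁻¹) ∨
        (∃ v : (PowerSeries ℤ_[p])ˣ,
            u = -(v * (Units.map ι.toRingHom.toMonoidHom v)⁻¹))) ∧
    ¬ ∃ v : (PowerSeries ℤ_[p])ˣ,
        (-1 : (PowerSeries ℤ_[p])ˣ) = v * (Units.map ι.toRingHom.toMonoidHom v)⁻¹ := by
  set J := Units.map ι.toRingHom.toMonoidHom with hJ
  have hJcoe : ∀ v : (PowerSeries ℤ_[p])ˣ, ((J v : (PowerSeries ℤ_[p])ˣ) : PowerSeries ℤ_[p])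
      = ι (v : PowerSeries ℤ_[p]) := fun v => rfl
  -- constant coefficient of ι X is 0
  have hccX : constantCoeff (R := ℤ_[p]) (ι PowerSeries.X) = 0 := by
    have h1 := congrArg (constantCoeff (R := ℤ_[p])) hγ
    simp only [map_mul, map_add, map_one, constantCoeff_X, add_zero, mul_one,
      constantCoeff_one] at h1
    linear_combination h1
  -- the constant coefficient of `ι f` only depends on the constant coefficient of `f`
  have key : ∀ f : PowerSeries ℤ_[p], constantCoeff (R := ℤ_[p]) (ι f)
      = constantCoeff (R := ℤ_[p]) (ι (C (R := ℤ_[p]) (constantCoeff (R := ℤ_[p]) f))) := by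
    intro f
    conv_lhs => rw [eq_shift_mul_X_add_const f]
    rw [map_add, map_mul, map_add, map_mul, hccX, mul_zero, zero_add]
  -- (2 : ZMod p) ≠ 0
  have h2 : (2 : ZMod p) ≠ 0 := by
    have : ((2 : ℕ) : ZMod p) ≠ 0 := by
      rw [Ne, ZMod.natCast_eq_zero_iff]
      intro hdvd
      have := (Nat.prime_dvd_prime_iff_eq (Fact.out : p.Prime) Nat.prime_two).mp hdvd
      rw [this] at hp
      exact (Nat.not_odd_iff_even.mpr (by norm_num)) hp
    simpa using this
  constructor
  · intro u hu
    have hJu : J u = u⁻¹ := by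
      rw [_root_.eq_inv_iff_mul_eq_one, mul_comm]; exact hu
    have hιu : ι (u : PowerSeries ℤ_[p])
        = ((u⁻¹ : (PowerSeries ℤ_[p])ˣ) : PowerSeries ℤ_[p]) := by
      rw [← hJcoe, hJu]
    set a := constantCoeff (R := ℤ_[p]) (u : PowerSeries ℤ_[p]) with ha
    by_cases hz : PadicInt.toZMod (1 + a) = 0
    · -- `1 - u` is a unit; `u = -(v ι(v)⁻¹)` with `v = 1 - u`
      right
      have hsum : PadicInt.toZMod ((1 : ℤ_[p]) + a) + PadicInt.toZMod ((1 : ℤ_[p]) - a)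
          = 2 := by
        rw [← map_add, show (1 : ℤ_[p]) + a + (1 - a) = 2 by ring, map_ofNat]
      have hne : PadicInt.toZMod ((1 : ℤ_[p]) - a) ≠ 0 := by
        intro h0
        rw [hz, h0, add_zero] at hsum
        exact h2 hsum.symm
      have hunit : IsUnit ((1 : PowerSeries ℤ_[p]) - (u : PowerSeries ℤ_[p])) := by
        rw [isUnit_iff_constantCoeff]
        exact aux_isUnit_of_toZMod_ne_zero (by simpa [ha] using hne)
      obtain ⟨w, hw⟩ := hunit
      refine ⟨w, ?_⟩
      have hkey : -u = w * (J w)⁻¹ := by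
        rw [_root_.eq_mul_inv_iff_mul_eq, Units.ext_iff, Units.val_mul, Units.val_neg,
          hJcoe, hw, map_sub, map_one, hιu]
        linear_combination Units.mul_inv u
      rw [← hkey, neg_neg]
    · -- `1 + u` is a unit; `u = v ι(v)⁻¹` with `v = 1 + u`
      left
      have hunit : IsUnit ((1 : PowerSeries ℤ_[p]) + (u : PowerSeries ℤ_[p])) := by
        rw [isUnit_iff_constantCoeff]
        exact aux_isUnit_of_toZMod_ne_zero (by simpa [ha] using hz)
      obtain ⟨w, hw⟩ := hunit
      refine ⟨w, ?_⟩
      rw [_root_.eq_mul_inv_iff_mul_eq, Units.ext_iff, Units.val_mul, hJcoe, hw,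
        map_add, map_one, hιu]
      linear_combination Units.mul_inv u
  · rintro ⟨v, hv⟩
    have hJv : J v = -v := by
      rw [_root_.eq_mul_inv_iff_mul_eq, neg_one_mul, neg_eq_iff_eq_neg] at hv
      exact hv
    have hel : ι (v : PowerSeries ℤ_[p]) = -(v : PowerSeries ℤ_[p]) := by
      rw [← hJcoe, hJv, Units.val_neg]
    set a := constantCoeff (R := ℤ_[p]) (v : PowerSeries ℤ_[p]) with ha
    have haun : IsUnit a := isUnit_constantCoeff _ v.isUnit
    have hpsi : constantCoeff (R := ℤ_[p]) (ι (C (R := ℤ_[p]) a)) = -a := by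
      rw [← key, hel, map_neg]
    set χ : ℤ_[p] →+* ZMod p :=
      PadicInt.toZMod.comp (((constantCoeff (R := ℤ_[p])).comp ι.toRingHom).comp (C (R := ℤ_[p]))) with hχ
    have hχ' : χ = PadicInt.toZMod := aux_ringHom_eq_toZMod p χ
    have h1 : PadicInt.toZMod a = PadicInt.toZMod (constantCoeff (R := ℤ_[p]) (ι (C (R := ℤ_[p]) a))) := by
      conv_lhs => rw [← hχ']
      rfl
    have hneg : PadicInt.toZMod a = - PadicInt.toZMod a := by
      conv_lhs => rw [h1]
      rw [hpsi, map_neg]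
    have h2a : (2 : ZMod p) * PadicInt.toZMod a = 0 := by linear_combination hneg
    rcases mul_eq_zero.mp h2a with h | h
    · exact h2 h
    · exact (haun.map PadicInt.toZMod).ne_zero h
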